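/- Let A be a noetherian commutative ring graded by an abelian group ι, let I be a homogeneous ideal of A, and let I = Q₁ ∩ ⋯ ∩ Q_r and I = Q'₁ ∩ ⋯ ∩ Q'_r be two minimal G-primary decompositions, indexed so that (√Q_i)* = (√Q'_i)* = P_i for each i. Let Ω ⊆ {1, …, r} be downward closed with respect to inclusion of the P_i (i.e., if i ∈ Ω and P_j ⊆ P_i then j ∈ Ω). Then ⋂_{i ∈ Ω} Q_i = ⋂_{i ∈ Ω} Q'_i; that is, the partial intersection over a poset ideal of G-associated G-primes is independent of the chosen minimal G-primary decomposition. -/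

import Mathlib

/-!
The partial intersection `⋂_{i ∈ Ω} Q i` has an intrinsic description in terms of `I` and the
`G`-primes `P i`: `x` lies in it iff `K * x ⊆ I` for some homogeneous ideal `K` contained in no
`P i` with `i ∈ Ω`. For `K` one may take `∏_{j ∉ Ω} Q j`: it avoids these `P i` because the
`G`-radical of a `G`-primary ideal is `G`-prime and `Ω` is downward closed. Conversely, the colon
`Q i : K` is homogeneous, contains `x` and satisfies `K * (Q i : K) ⊆ Q i`; since `K ⊄ P i`,
`G`-primarity of `Q i` forces `Q i : K ⊆ Q i`.
-/

/-- A homogeneous ideal `Q` of a graded ring `A` is `G`-primary if `Q ≠ A` and for all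
homogeneous ideals `I`, `J` with `I·J ⊆ Q` and `J ⊄ Q`, one has `I ⊆ (√Q)*`. -/
def Ideal.IsGPrimary {ι : Type*} [AddCommGroup ι] [DecidableEq ι] {A : Type*} [CommRing A]
    (𝒜 : ι → AddSubgroup A) [GradedRing 𝒜] (Q : Ideal A) : Prop :=
  Q ≠ ⊤ ∧ ∀ I J : Ideal A, I.IsHomogeneous 𝒜 → J.IsHomogeneous 𝒜 →
    I * J ≤ Q → ¬ J ≤ Q → I ≤ (Q.radical.homogeneousCore 𝒜).toIdeal

/-- A minimal `G`-primary decomposition of a homogeneous ideal `I`: each `Q i` is a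
`G`-primary homogeneous ideal, `I = ⋂ i, Q i`, the `G`-radicals `(√(Q i))*` are pairwise
distinct, and no component is redundant. -/
def IsMinimalGPrimaryDecomposition {ι : Type*} [AddCommGroup ι] [DecidableEq ι]
    {A : Type*} [CommRing A] (𝒜 : ι → AddSubgroup A) [GradedRing 𝒜]
    {κ : Type*} [Fintype κ] (I : Ideal A) (Q : κ → Ideal A) : Prop :=
  (∀ i, (Q i).IsHomogeneous 𝒜 ∧ (Q i).IsGPrimary 𝒜) ∧
  I = ⨅ i, Q i ∧
  (∀ i j, ((Q i).radical.homogeneousCore 𝒜).toIdeal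
      = ((Q j).radical.homogeneousCore 𝒜).toIdeal → i = j) ∧
  (∀ i, ¬ (⨅ j, ⨅ (_ : j ≠ i), Q j) ≤ Q i)

open SetLike DirectSum

section Homogeneous

variable {ι σ A : Type*} [DecidableEq ι] [SetLike σ A] {𝒜 : ι → σ}

theorem Ideal.IsHomogeneous.le_of_forall_isHomogeneousElem [AddMonoid ι] [Semiring A]
    [AddSubmonoidClass σ A] [GradedRing 𝒜] {X J : Ideal A} (hX : X.IsHomogeneous 𝒜)
    (h : ∀ x ∈ X, IsHomogeneousElem 𝒜 x → x ∈ J) : X ≤ J := by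
  rw [← hX.toIdeal_homogeneousCore_eq_self]
  exact Ideal.span_le.2 (by rintro _ ⟨⟨x, hx⟩, hxX, rfl⟩; exact h x hxX hx)

theorem Ideal.IsHomogeneous.exists_isHomogeneousElem_notMem [AddMonoid ι] [Semiring A]
    [AddSubmonoidClass σ A] [GradedRing 𝒜] {X J : Ideal A} (hX : X.IsHomogeneous 𝒜)
    (h : ¬ X ≤ J) : ∃ x ∈ X, IsHomogeneousElem 𝒜 x ∧ x ∉ J := by
  by_contra! h'
  exact h (hX.le_of_forall_isHomogeneousElem h')

theorem Ideal.IsHomogeneous.prod [AddMonoid ι] [CommSemiring A] [AddSubmonoidClass σ A]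
    [GradedRing 𝒜] {κ : Type*} {s : Finset κ} {X : κ → Ideal A}
    (hX : ∀ j ∈ s, (X j).IsHomogeneous 𝒜) : (∏ j ∈ s, X j).IsHomogeneous 𝒜 :=
  Finset.prod_induction _ _ (fun _ _ => .mul) (by simpa using .top 𝒜) hX

theorem Ideal.IsHomogeneous.colon [AddRightCancelMonoid ι] [CommSemiring A]
    [AddSubmonoidClass σ A] [GradedRing 𝒜] {I K : Ideal A} (hI : I.IsHomogeneous 𝒜)
    (hK : K.IsHomogeneous 𝒜) : (I.colon (K : Set A)).IsHomogeneous 𝒜 := by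
  intro n r hr
  simp only [Submodule.mem_colon, smul_eq_mul] at hr ⊢
  have hK_le : K ≤ Submodule.comap (LinearMap.mulLeft A (decompose 𝒜 r n : A)) I := by
    refine hK.le_of_forall_isHomogeneousElem fun k hk ⟨d, hkd⟩ => ?_
    have := hI (n + d) (hr k hk)
    rwa [coe_decompose_mul_add_of_right_mem 𝒜 hkd] at this
  exact fun k hk => hK_le hk

end Homogeneous

namespace Ideal

variable {ι A : Type*} [AddCommGroup ι] [DecidableEq ι] [CommRing A]
  {𝒜 : ι → AddSubgroup A} [GradedRing 𝒜]

variable (𝒜) in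
def gRadical (Q : Ideal A) : Ideal A :=
  (Q.radical.homogeneousCore 𝒜).toIdeal

variable {Q Q' : Ideal A}

theorem gRadical_le_radical : Q.gRadical 𝒜 ≤ Q.radical :=
  toIdeal_homogeneousCore_le 𝒜 _

theorem gRadical_le_gRadical_of_le (h : Q ≤ Q'.gRadical 𝒜) : Q.gRadical 𝒜 ≤ Q'.gRadical 𝒜 :=
  homogeneousCore_mono 𝒜 (radical_le_radical_iff.2 (h.trans gRadical_le_radical))

theorem mem_gRadical_iff {x : A} (hx : IsHomogeneousElem 𝒜 x) :
    x ∈ Q.gRadical 𝒜 ↔ x ∈ Q.radical :=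
  ⟨fun h => gRadical_le_radical h, mem_homogeneousCore_of_homogeneous_of_mem hx⟩

theorem IsGPrimary.gRadical_ne_top (hQ : Q.IsGPrimary 𝒜) : Q.gRadical 𝒜 ≠ ⊤ := fun h =>
  hQ.1 (radical_eq_top.1 (top_le_iff.1 (h.ge.trans gRadical_le_radical)))

theorem IsGPrimary.mem_or_mem (hQ : Q.IsGPrimary 𝒜) {x y : A} (hx : IsHomogeneousElem 𝒜 x)
    (hy : IsHomogeneousElem 𝒜 y) (hxy : x * y ∈ Q.gRadical 𝒜) :
    x ∈ Q.gRadical 𝒜 ∨ y ∈ Q.gRadical 𝒜 := by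
  obtain ⟨n, hn⟩ := gRadical_le_radical hxy
  have hpow (z : A) (hz : IsHomogeneousElem 𝒜 z) : (span {z ^ n}).IsHomogeneous 𝒜 :=
    homogeneous_span 𝒜 _ (by rintro _ rfl; exact (homogeneousSubmonoid 𝒜).pow_mem hz n)
  rw [mem_gRadical_iff hx, mem_gRadical_iff hy]
  by_cases hyn : y ^ n ∈ Q
  · exact .inr ⟨n, hyn⟩
  left
  have hspan : span {x ^ n} * span {y ^ n} ≤ Q := by
    rwa [span_singleton_mul_span_singleton, span_singleton_le_iff_mem, ← mul_pow]
  have := hQ.2 _ _ (hpow x hx) (hpow y hy) hspan (by rwa [span_singleton_le_iff_mem])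
  exact mem_radical_of_pow_mem (gRadical_le_radical (this (mem_span_singleton_self _)))

theorem IsGPrimary.le_or_le_of_mul_le (hQ : Q.IsGPrimary 𝒜) {X Y : Ideal A}
    (hX : X.IsHomogeneous 𝒜) (hY : Y.IsHomogeneous 𝒜) (hXY : X * Y ≤ Q.gRadical 𝒜) :
    X ≤ Q.gRadical 𝒜 ∨ Y ≤ Q.gRadical 𝒜 := by
  by_contra! h
  obtain ⟨x, hxX, hx, hxQ⟩ := hX.exists_isHomogeneousElem_notMem h.1
  obtain ⟨y, hyY, hy, hyQ⟩ := hY.exists_isHomogeneousElem_notMem h.2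
  exact (hQ.mem_or_mem hx hy (hXY (mul_mem_mul hxX hyY))).elim hxQ hyQ

theorem IsGPrimary.exists_le_of_prod_le (hQ : Q.IsGPrimary 𝒜) {κ : Type*} {s : Finset κ}
    {X : κ → Ideal A} (hX : ∀ j ∈ s, (X j).IsHomogeneous 𝒜)
    (h : ∏ j ∈ s, X j ≤ Q.gRadical 𝒜) : ∃ j ∈ s, X j ≤ Q.gRadical 𝒜 := by
  classical
  induction s using Finset.induction_on with
  | empty => exact absurd (top_le_iff.1 (by simpa using h)) hQ.gRadical_ne_top
  | insert a s ha ih =>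
    rw [Finset.prod_insert ha] at h
    have hs : ∀ j ∈ s, (X j).IsHomogeneous 𝒜 := fun j hj => hX j (Finset.mem_insert_of_mem hj)
    rcases hQ.le_or_le_of_mul_le (hX a (Finset.mem_insert_self a s)) (IsHomogeneous.prod hs) h
      with haQ | hsQ
    · exact ⟨a, Finset.mem_insert_self a s, haQ⟩
    · obtain ⟨j, hj, hjQ⟩ := ih hs hsQ
      exact ⟨j, Finset.mem_insert_of_mem hj, hjQ⟩

theorem IsGPrimary.mem_of_forall_mul_mem (hQ : Q.IsGPrimary 𝒜) (hQh : Q.IsHomogeneous 𝒜)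
    {K : Ideal A} (hK : K.IsHomogeneous 𝒜) (hKQ : ¬ K ≤ Q.gRadical 𝒜) {x : A}
    (hx : ∀ k ∈ K, k * x ∈ Q) : x ∈ Q := by
  have hxJ : x ∈ Q.colon (K : Set A) :=
    Submodule.mem_colon.2 fun k hk => by simpa [mul_comm] using hx k hk
  have hKJ : K * Q.colon (K : Set A) ≤ Q := mul_le.2 fun k hk y hy => by
    simpa [mul_comm] using Submodule.mem_colon.1 hy k hk
  by_contra hxQ
  exact hKQ (hQ.2 K _ hK (hQh.colon hK) hKJ fun h => hxQ (h hxJ))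

variable {κ : Type*} {I : Ideal A} {Q P : κ → Ideal A} {Ω : Set κ} {x : A}

theorem exists_isHomogeneous_mul_mem_of_mem_biInf [Fintype κ]
    (hQ : ∀ i, (Q i).IsHomogeneous 𝒜 ∧ (Q i).IsGPrimary 𝒜)
    (hIQ : I = ⨅ i, Q i) (hPQ : ∀ i, (Q i).gRadical 𝒜 = P i)
    (hΩ : ∀ i ∈ Ω, ∀ j, P j ≤ P i → j ∈ Ω) (hx : x ∈ ⨅ i ∈ Ω, Q i) :
    ∃ K : Ideal A, K.IsHomogeneous 𝒜 ∧ (∀ i ∈ Ω, ¬ K ≤ P i) ∧ ∀ k ∈ K, k * x ∈ I := by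
  classical
  refine ⟨∏ j ∈ Finset.univ.filter (· ∉ Ω), Q j, IsHomogeneous.prod fun j _ => (hQ j).1,
    fun i hi hle => ?_, fun k hk => ?_⟩
  · rw [← hPQ i] at hle
    obtain ⟨j, hj, hjle⟩ := (hQ i).2.exists_le_of_prod_le (fun j _ => (hQ j).1) hle
    refine (Finset.mem_filter.1 hj).2 (hΩ i hi j ?_)
    simpa only [← hPQ] using gRadical_le_gRadical_of_le hjle
  · rw [hIQ, mem_iInf]
    intro j
    by_cases hj : j ∈ Ω
    · exact mul_mem_left _ k (mem_iInf.1 (mem_iInf.1 hx j) hj)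
    · exact mul_mem_right x _ (prod_le_inf.trans (Finset.inf_le (by simp [hj])) hk)

theorem mem_biInf_of_isHomogeneous_mul_mem
    (hQ : ∀ i, (Q i).IsHomogeneous 𝒜 ∧ (Q i).IsGPrimary 𝒜)
    (hIQ : I = ⨅ i, Q i) (hPQ : ∀ i, (Q i).gRadical 𝒜 = P i) {K : Ideal A}
    (hK : K.IsHomogeneous 𝒜) (hKP : ∀ i ∈ Ω, ¬ K ≤ P i) (hx : ∀ k ∈ K, k * x ∈ I) :
    x ∈ ⨅ i ∈ Ω, Q i :=
  mem_iInf.2 fun i => mem_iInf.2 fun hi =>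
    (hQ i).2.mem_of_forall_mul_mem (hQ i).1 hK (hPQ i ▸ hKP i hi)
      fun k hk => (hIQ ▸ iInf_le Q i) (hx k hk)

theorem mem_biInf_iff_exists_isHomogeneous_mul_mem [Fintype κ]
    (hQ : ∀ i, (Q i).IsHomogeneous 𝒜 ∧ (Q i).IsGPrimary 𝒜)
    (hIQ : I = ⨅ i, Q i) (hPQ : ∀ i, (Q i).gRadical 𝒜 = P i)
    (hΩ : ∀ i ∈ Ω, ∀ j, P j ≤ P i → j ∈ Ω) :
    x ∈ ⨅ i ∈ Ω, Q i ↔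
      ∃ K : Ideal A, K.IsHomogeneous 𝒜 ∧ (∀ i ∈ Ω, ¬ K ≤ P i) ∧ ∀ k ∈ K, k * x ∈ I :=
  ⟨exists_isHomogeneous_mul_mem_of_mem_biInf hQ hIQ hPQ hΩ,
    fun ⟨_, hK, hKP, hx⟩ => mem_biInf_of_isHomogeneous_mul_mem hQ hIQ hPQ hK hKP hx⟩

end Ideal

theorem gPrimary_decomposition_partial_inter_unique_general {ι : Type*} [AddCommGroup ι]
    [DecidableEq ι] {A : Type*} [CommRing A]
    (𝒜 : ι → AddSubgroup A) [GradedRing 𝒜] {r : ℕ} (I : Ideal A)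
    (Q Q' : Fin r → Ideal A) (P : Fin r → Ideal A)
    (hQ : IsMinimalGPrimaryDecomposition 𝒜 I Q)
    (hQ' : IsMinimalGPrimaryDecomposition 𝒜 I Q')
    (hPQ : ∀ i, ((Q i).radical.homogeneousCore 𝒜).toIdeal = P i)
    (hPQ' : ∀ i, ((Q' i).radical.homogeneousCore 𝒜).toIdeal = P i)
    (Ω : Set (Fin r)) (hΩ : ∀ i ∈ Ω, ∀ j, P j ≤ P i → j ∈ Ω) :
    ⨅ i ∈ Ω, Q i = ⨅ i ∈ Ω, Q' i := by
  ext x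
  rw [Ideal.mem_biInf_iff_exists_isHomogeneous_mul_mem hQ.1 hQ.2.1 hPQ hΩ,
    Ideal.mem_biInf_iff_exists_isHomogeneous_mul_mem hQ'.1 hQ'.2.1 hPQ' hΩ]

/-- Let `I = Q₁ ∩ ⋯ ∩ Q_r` and `I = Q'₁ ∩ ⋯ ∩ Q'_r` be two minimal `G`-primary decompositions
of a homogeneous ideal `I` of a noetherian graded ring, indexed so that
`(√(Q i))* = (√(Q' i))* = P i`.  If `Ω` is downward closed with respect to inclusion of the
`P i` (if `i ∈ Ω` and `P j ⊆ P i` then `j ∈ Ω`), then `⋂_{i ∈ Ω} Q i = ⋂_{i ∈ Ω} Q' i`. -/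
theorem gPrimary_decomposition_partial_inter_unique {ι : Type*} [AddCommGroup ι]
    [DecidableEq ι] {A : Type*} [CommRing A] [IsNoetherianRing A]
    (𝒜 : ι → AddSubgroup A) [GradedRing 𝒜] {r : ℕ} (I : Ideal A) (hI : I.IsHomogeneous 𝒜)
    (Q Q' : Fin r → Ideal A) (P : Fin r → Ideal A)
    (hQ : IsMinimalGPrimaryDecomposition 𝒜 I Q)
    (hQ' : IsMinimalGPrimaryDecomposition 𝒜 I Q')
    (hPQ : ∀ i, ((Q i).radical.homogeneousCore 𝒜).toIdeal = P i)
    (hPQ' : ∀ i, ((Q' i).radical.homogeneousCore 𝒜).toIdeal = P i)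
    (Ω : Set (Fin r)) (hΩ : ∀ i ∈ Ω, ∀ j, P j ≤ P i → j ∈ Ω) :
    ⨅ i ∈ Ω, Q i = ⨅ i ∈ Ω, Q' i :=
  gPrimary_decomposition_partial_inter_unique_general 𝒜 I Q Q' P hQ hQ' hPQ hPQ' Ω hΩ
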